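/- For any positive integers n, k with n > k, the polynomial [2k+1]_q · [2k choose k]_q · ∑_{h=0}^{n-1} q^h [h choose k]_q^2 is divisible by [n]_q in ℤ[q]. -/

import Mathlib

/-!
`[n]_q` is the product of the cyclotomic polynomials `Φ_d` with `1 < d ∣ n`, which are pairwise
coprime over `ℚ`, so it suffices that the polynomial vanishes at every primitive `d`-th root of
unity `ζ`. Write `k = c d + e` with `e < d`. By the `q`-Lucas theorem,
`[a d + b choose c d + e]_ζ = (a choose c) [b choose e]_ζ` for `b, e < d`.
* If `2 e + 1 = d`, then `d ∣ 2 k + 1` and `[2 k + 1]_ζ = 0`.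
* If `2 e ≥ d`, then `[2 k choose k]_ζ = (2 c + 1 choose c) [2 e - d choose e]_ζ = 0`.
* If `2 e + 1 < d`, the sum splits into blocks of length `d`, each a multiple of
  `∑_{b < d} ζ^b [b choose e]_ζ^2`. Up to a nonzero factor this is the sum, over all `d`-th roots
  of unity, of a polynomial of degree `2 e + 1 < d` without constant term, hence `0`.
-/

open Polynomial Finset

/-- The q-integer `[n]_q = 1 + q + ⋯ + q^{n-1}` as a polynomial in `ℤ[q]`. -/
noncomputable def qint (n : ℕ) : Polynomial ℤ := ∑ i ∈ Finset.range n, X ^ i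

/-- The q-factorial `[n]_q! = [n]_q [n-1]_q ⋯ [1]_q`. -/
noncomputable def qfact : ℕ → Polynomial ℤ
  | 0 => 1
  | n + 1 => qint (n + 1) * qfact n

/-- The Gaussian (q-)binomial coefficient `[n choose k]_q` as a polynomial in `ℤ[q]`,
defined by the q-Pascal recurrence; it equals `∏_{i=1}^k (1-q^{n-i+1})/(1-q^i)` for
`0 ≤ k ≤ n` and `0` otherwise. -/
noncomputable def qbinom : ℕ → ℕ → Polynomial ℤ
  | _, 0 => 1
  | 0, _ + 1 => 0
  | n + 1, k + 1 => qbinom n k + X ^ (k + 1) * qbinom n (k + 1)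

lemma qbinom_zero_right (n : ℕ) : qbinom n 0 = 1 := by cases n <;> rfl

lemma qbinom_zero_succ (k : ℕ) : qbinom 0 (k + 1) = 0 := rfl

lemma qbinom_succ_succ (n k : ℕ) :
    qbinom (n + 1) (k + 1) = qbinom n k + X ^ (k + 1) * qbinom n (k + 1) := rfl

lemma qbinom_eq_zero_of_lt {n k : ℕ} (h : n < k) : qbinom n k = 0 := by
  induction n generalizing k with
  | zero => obtain ⟨k, rfl⟩ := Nat.exists_eq_succ_of_ne_zero h.ne'; rfl
  | succ n ih =>
    obtain ⟨k, rfl⟩ := Nat.exists_eq_succ_of_ne_zero (by omega : k ≠ 0)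
    rw [qbinom_succ_succ, ih (by omega), ih (by omega), mul_zero, add_zero]

lemma qbinom_self (n : ℕ) : qbinom n n = 1 := by
  induction n with
  | zero => rfl
  | succ n ih => rw [qbinom_succ_succ, ih, qbinom_eq_zero_of_lt n.lt_succ_self, mul_zero, add_zero]

/-- The `q`-analogue of `e! * (b choose e) = b (b - 1) ⋯ (b - e + 1)`, with both sides multiplied by
`q ^ (0 + 1 + ⋯ + (e - 1))` so that no negative powers of `q` occur. -/
theorem prod_mul_qbinom (b e : ℕ) :
    (∏ i ∈ range e, X ^ i * (X ^ (i + 1) - 1)) * qbinom b e =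
      ∏ i ∈ range e, (X ^ b - X ^ i : ℤ[X]) := by
  induction b generalizing e with
  | zero =>
    cases e with
    | zero => simp [qbinom_zero_right]
    | succ e => simp [qbinom_zero_succ, prod_range_succ']
  | succ b ih =>
    cases e with
    | zero => simp [qbinom_zero_right]
    | succ e =>
      have shift : ∏ i ∈ range e, (X ^ (b + 1) - X ^ (i + 1) : ℤ[X]) =
          X ^ e * ∏ i ∈ range e, (X ^ b - X ^ i) := by
        simp only [pow_succ', ← mul_sub, prod_mul_distrib, prod_const, card_range]
      rw [prod_range_succ, qbinom_succ_succ, prod_range_succ' (fun i => X ^ (b + 1) - X ^ i), shift]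
      have ih_succ := ih (e + 1)
      rw [prod_range_succ, prod_range_succ] at ih_succ
      linear_combination X ^ e * (X ^ (e + 1) - 1) * ih e + X ^ (e + 1) * ih_succ

section Evaluation

variable {R : Type*} [CommRing R] {ζ : R}

lemma aeval_qbinom_succ_succ (n k : ℕ) :
    aeval ζ (qbinom (n + 1) (k + 1)) =
      aeval ζ (qbinom n k) + ζ ^ (k + 1) * aeval ζ (qbinom n (k + 1)) := by
  simp [qbinom_succ_succ]

theorem eq_aeval_qbinom_of_pascal (g : ℕ → ℕ → R) (zero_right : ∀ h, g h 0 = 1)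
    (zero_succ : ∀ k, g 0 (k + 1) = 0)
    (succ_succ : ∀ h k, g (h + 1) (k + 1) = g h k + ζ ^ (k + 1) * g h (k + 1)) (h k : ℕ) :
    g h k = aeval ζ (qbinom h k) := by
  induction h generalizing k with
  | zero => cases k <;> simp [zero_right, zero_succ, qbinom_zero_right, qbinom_zero_succ]
  | succ h ih =>
    cases k <;> simp [zero_right, qbinom_zero_right, succ_succ, aeval_qbinom_succ_succ, ih]

lemma aeval_prod_mul_qbinom (b e : ℕ) :
    (∏ i ∈ range e, ζ ^ i * (ζ ^ (i + 1) - 1)) * aeval ζ (qbinom b e) =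
      ∏ i ∈ range e, (ζ ^ b - ζ ^ i) := by
  simpa using congrArg (aeval ζ) (prod_mul_qbinom b e)

variable [IsDomain R] {d : ℕ}

lemma IsPrimitiveRoot.prod_pow_mul_pow_succ_sub_one_ne_zero (hζ : IsPrimitiveRoot ζ d) {e : ℕ}
    (he : e < d) : ∏ i ∈ range e, ζ ^ i * (ζ ^ (i + 1) - 1) ≠ 0 :=
  prod_ne_zero_iff.2 fun i hi => mul_ne_zero (pow_ne_zero _ (hζ.ne_zero (by omega)))
    (sub_ne_zero.2 (hζ.pow_ne_one_of_pos_of_lt i.succ_ne_zero (by simp at hi; omega)))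

lemma IsPrimitiveRoot.aeval_qbinom_self_left_eq_zero (hζ : IsPrimitiveRoot ζ d) {e : ℕ}
    (he₀ : 0 < e) (he : e < d) : aeval ζ (qbinom d e) = 0 := by
  have h := aeval_prod_mul_qbinom (ζ := ζ) d e
  rw [hζ.pow_eq_one, prod_eq_zero (f := fun i => 1 - ζ ^ i) (mem_range.2 he₀) (by simp)] at h
  exact (mul_eq_zero.1 h).resolve_left (hζ.prod_pow_mul_pow_succ_sub_one_ne_zero he)

theorem IsPrimitiveRoot.aeval_qbinom_mul_add (hζ : IsPrimitiveRoot ζ d) {a b c e : ℕ} (hb : b < d)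
    (he : e < d) :
    aeval ζ (qbinom (a * d + b) (c * d + e)) = a.choose c * aeval ζ (qbinom b e) := by
  have hd : 0 < d := by omega
  let g (h k : ℕ) : R := (h / d).choose (k / d) * aeval ζ (qbinom (h % d) (k % d))
  have g_digits (a b c e : ℕ) (hb : b < d) (he : e < d) :
      g (a * d + b) (c * d + e) = a.choose c * aeval ζ (qbinom b e) := by
    have div_eq {a b : ℕ} (hb : b < d) : (a * d + b) / d = a := by
      rw [Nat.add_comm, Nat.add_mul_div_right _ _ hd, Nat.div_eq_of_lt hb, zero_add]
    simp only [g, div_eq hb, div_eq he, Nat.mul_add_mod_of_lt hb, Nat.mul_add_mod_of_lt he]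
  have digits (h : ℕ) : ∃ a b, b < d ∧ h = a * d + b :=
    ⟨h / d, h % d, Nat.mod_lt h hd, (Nat.div_add_mod' h d).symm⟩
  have carry (a b : ℕ) (hb : b < d) :
      (b + 1 < d ∧ a * d + b + 1 = a * d + (b + 1)) ∨
        (b + 1 = d ∧ a * d + b + 1 = (a + 1) * d + 0) := by
    rcases (Nat.succ_le_of_lt hb).lt_or_eq with h | rfl
    · exact .inl ⟨h, rfl⟩
    · exact .inr ⟨rfl, by rw [Nat.succ_eq_add_one]; ring⟩
  rw [← g_digits a b c e hb he]
  refine (eq_aeval_qbinom_of_pascal g (fun h => by simp [g, qbinom_zero_right]) (fun k => ?_)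
    (fun h k => ?_) _ _).symm
  · obtain ⟨c, e, he, hk⟩ := digits (k + 1)
    rw [hk, ← zero_mul d, ← add_zero (0 * d), g_digits 0 0 c e hd he]
    rcases c with _ | c
    · obtain ⟨e, rfl⟩ : ∃ e', e = e' + 1 := ⟨e - 1, by omega⟩
      simp [qbinom_zero_succ]
    · simp
  · obtain ⟨a, b, hb, rfl⟩ := digits h
    obtain ⟨c, e, he, rfl⟩ := digits k
    have hζe : ζ ^ (c * d + e + 1) = ζ ^ (e + 1) := by
      rw [add_assoc, pow_add, pow_mul', hζ.pow_eq_one, one_pow, one_mul]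
    rw [hζe]
    rcases carry a b hb with ⟨hb', hab⟩ | ⟨hb', hab⟩ <;>
      rcases carry c e he with ⟨he', hce⟩ | ⟨he', hce⟩ <;>
      rw [hab, hce, g_digits _ _ _ _ (by omega) (by omega), g_digits _ _ _ _ hb he]
    · rw [g_digits _ _ _ _ hb he', aeval_qbinom_succ_succ]
      ring
    · rw [g_digits _ _ _ _ hb hd, qbinom_eq_zero_of_lt (by omega : b < e), he', hζ.pow_eq_one]
      simp [qbinom_zero_right]
    · have hd_succ := hζ.aeval_qbinom_self_left_eq_zero e.succ_pos he'
      rw [← hb', aeval_qbinom_succ_succ] at hd_succ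
      rw [g_digits _ _ _ _ hb he', qbinom_zero_succ, map_zero]
      linear_combination -(a.choose c : R) * hd_succ
    · obtain rfl : b = e := by omega
      rw [g_digits _ _ _ _ hb hd, he', hζ.pow_eq_one, Nat.choose_succ_succ]
      simp [qbinom_self, qbinom_zero_right]

theorem IsPrimitiveRoot.sum_eval_pow (hζ : IsPrimitiveRoot ζ d) {p : R[X]} (hp : p.natDegree < d) :
    ∑ b ∈ range d, p.eval (ζ ^ b) = d * p.coeff 0 := by
  simp_rw [eval_eq_sum_range' hp]
  rw [sum_comm, sum_eq_single_of_mem 0 (mem_range.2 (by omega))]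
  · simp
  · intro m hm hm0
    have hζm : ζ ^ m ≠ 1 := hζ.pow_ne_one_of_pos_of_lt hm0 (mem_range.1 hm)
    have geom : ∑ b ∈ range d, (ζ ^ m) ^ b = 0 := by
      have h := geom_sum_mul (ζ ^ m) d
      rw [pow_right_comm, hζ.pow_eq_one, one_pow, sub_self] at h
      exact (mul_eq_zero.1 h).resolve_right (sub_ne_zero.2 hζm)
    simp_rw [← pow_mul, mul_comm _ m, pow_mul, ← mul_sum, geom, mul_zero]

theorem IsPrimitiveRoot.sum_pow_mul_aeval_qbinom_sq (hζ : IsPrimitiveRoot ζ d) {e : ℕ}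
    (he : 2 * e + 1 < d) : ∑ b ∈ range d, ζ ^ b * aeval ζ (qbinom b e) ^ 2 = 0 := by
  set w := ∏ i ∈ range e, ζ ^ i * (ζ ^ (i + 1) - 1)
  set p : R[X] := X * (∏ i ∈ range e, (X - C (ζ ^ i))) ^ 2
  have hp : p.natDegree < d := by
    have hmonic : (∏ i ∈ range e, (X - C (ζ ^ i))).Monic :=
      monic_prod_of_monic _ _ fun i _ => monic_X_sub_C _
    rw [natDegree_X_mul (hmonic.pow 2).ne_zero, hmonic.natDegree_pow,
      natDegree_finsetProd_X_sub_C_eq_card, card_range]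
    omega
  have eval_p (b : ℕ) : p.eval (ζ ^ b) = w ^ 2 * (ζ ^ b * aeval ζ (qbinom b e) ^ 2) := by
    rw [mul_left_comm, ← mul_pow, aeval_prod_mul_qbinom]
    simp [p, eval_prod]
  have h := hζ.sum_eval_pow hp
  simp_rw [eval_p, ← mul_sum, p, coeff_X_mul_zero, mul_zero] at h
  exact (mul_eq_zero.1 h).resolve_left
    (pow_ne_zero _ (hζ.prod_pow_mul_pow_succ_sub_one_ne_zero (by omega)))

theorem IsPrimitiveRoot.aeval_sum_pow_mul_qbinom_sq (hζ : IsPrimitiveRoot ζ d) {n k : ℕ}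
    (hdn : d ∣ n) (hk : 2 * (k % d) + 1 < d) :
    aeval ζ (∑ h ∈ range n, X ^ h * qbinom h k ^ 2) = 0 := by
  obtain ⟨m, rfl⟩ := hdn
  have k_digits : k = k / d * d + k % d := (Nat.div_add_mod' k d).symm
  have block (a : ℕ) : ∑ b ∈ range d, ζ ^ (a * d + b) * aeval ζ (qbinom (a * d + b) k) ^ 2 = 0 := by
    have term (b : ℕ) (hb : b ∈ range d) : ζ ^ (a * d + b) * aeval ζ (qbinom (a * d + b) k) ^ 2 =
        (a.choose (k / d) : R) ^ 2 * (ζ ^ b * aeval ζ (qbinom b (k % d)) ^ 2) := by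
      rw [k_digits, hζ.aeval_qbinom_mul_add (mem_range.1 hb) (Nat.mod_lt k (by omega)), ← k_digits,
        pow_add, pow_mul', hζ.pow_eq_one, one_pow, one_mul]
      ring
    rw [sum_congr rfl term, ← mul_sum, hζ.sum_pow_mul_aeval_qbinom_sq hk, mul_zero]
  simp only [map_sum, map_mul, map_pow, aeval_X]
  induction m with
  | zero => simp
  | succ m ih => rw [mul_add, mul_one, sum_range_add, ih, zero_add, mul_comm]; exact block m

theorem IsPrimitiveRoot.aeval_qbinom_two_mul_self (hζ : IsPrimitiveRoot ζ d) (hd : 0 < d) {k : ℕ}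
    (hk : d ≤ 2 * (k % d)) : aeval ζ (qbinom (2 * k) k) = 0 := by
  obtain ⟨c, e, he, rfl⟩ : ∃ c e, e < d ∧ k = c * d + e :=
    ⟨k / d, k % d, Nat.mod_lt k hd, (Nat.div_add_mod' k d).symm⟩
  rw [Nat.mul_add_mod_of_lt he] at hk
  have two_mul_digits : 2 * (c * d + e) = (2 * c + 1) * d + (2 * e - d) := by
    zify [hk]
    ring
  rw [two_mul_digits, hζ.aeval_qbinom_mul_add (by omega) he, qbinom_eq_zero_of_lt (by omega),
    map_zero, mul_zero]

theorem IsPrimitiveRoot.aeval_qint (hζ : IsPrimitiveRoot ζ d) (hd : 1 < d) {m : ℕ} (hdm : d ∣ m) :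
    aeval ζ (qint m) = 0 := by
  have h := geom_sum_mul ζ m
  rw [(hζ.pow_eq_one_iff_dvd m).2 hdm, sub_self] at h
  simpa [qint] using (mul_eq_zero.1 h).resolve_right (sub_ne_zero.2 (hζ.ne_one hd))

end Evaluation

theorem qint_dvd_of_forall_aeval_eq_zero {n : ℕ} (hn : 0 < n) {p : ℤ[X]}
    (hp : ∀ d ∈ n.divisors, d ≠ 1 → ∀ ζ : ℂ, IsPrimitiveRoot ζ d → aeval ζ p = 0) :
    qint n ∣ p := by
  have hprod : qint n = ∏ d ∈ n.divisors.erase 1, cyclotomic d ℤ :=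
    (prod_cyclotomic_eq_geom_sum hn ℤ).symm
  have hmonic : (qint n).Monic := by
    rw [hprod]
    exact monic_prod_of_monic _ _ fun d _ => cyclotomic.monic d ℤ
  rw [← map_dvd_map (Int.castRingHom ℚ) Int.cast_injective hmonic, hprod, Polynomial.map_prod]
  refine prod_dvd_of_coprime (fun a _ b _ hab => ?_) fun d hd => ?_
  · simp only [Function.onFun, map_cyclotomic_int]
    exact cyclotomic.isCoprime_rat hab
  obtain ⟨hd1, hdn⟩ := mem_erase.1 hd
  have hd0 : 0 < d := Nat.pos_of_mem_divisors hdn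
  have hζ := Complex.isPrimitiveRoot_exp d hd0.ne'
  refine Polynomial.map_dvd _ ?_
  rw [cyclotomic_eq_minpoly hζ hd0]
  exact minpoly.isIntegrallyClosed_dvd (hζ.isIntegral hd0) (hp d hdn hd1 _ hζ)

theorem stmt4_general (n k : ℕ) (hkn : k < n) :
    qint n ∣ qint (2 * k + 1) * qbinom (2 * k) k *
        ∑ h ∈ Finset.range n, X ^ h * (qbinom h k) ^ 2 := by
  refine qint_dvd_of_forall_aeval_eq_zero (by omega) fun d hdn hd1 ζ hζ => ?_
  have hd : 1 < d := by
    have := Nat.pos_of_mem_divisors hdn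
    omega
  simp only [map_mul]
  rcases lt_trichotomy (2 * (k % d) + 1) d with h | h | h
  · rw [hζ.aeval_sum_pow_mul_qbinom_sq (Nat.dvd_of_mem_divisors hdn) h, mul_zero]
  · have hdvd : d ∣ 2 * k + 1 := ⟨2 * (k / d) + 1, by
      have := Nat.div_add_mod k d
      rw [mul_add, mul_one, mul_left_comm]
      omega⟩
    rw [hζ.aeval_qint hd hdvd, zero_mul, zero_mul]
  · rw [hζ.aeval_qbinom_two_mul_self (by omega) (by omega), mul_zero, zero_mul]

/-- for `0 < k < n`, `[n]_q` divides
`[2k+1]_q [2k choose k]_q ∑_{h<n} q^h [h choose k]_q^2` in `ℤ[q]`. -/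
theorem stmt4 (n k : ℕ) (hk : 0 < k) (hkn : k < n) :
    qint n ∣ qint (2 * k + 1) * qbinom (2 * k) k *
        ∑ h ∈ Finset.range n, X ^ h * (qbinom h k) ^ 2 :=
  stmt4_general n k hkn
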